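/- arXiv:2211.14210 — 2 statements merged into one kernel-verified Lean document; each statement's English description precedes it below -/
import Mathlib

section
/- Let p, q ∈ k^{n+1} be points, each with all coordinates nonzero, and let f = a X^α - b X^β be a binomial (a, b ≠ 0) vanishing at both p and q. Then for every binomial g = c X^α - d X^β with the same exponents (c, d ≠ 0), the transformed polynomials g^{⋆p} and g^{⋆q} are nonzero scalar multiples of each other. -/
open MvPolynomial

/-- Let `p, q` be points with all coordinates nonzero and let
`f = a X^α - b X^β` (`a, b ≠ 0`) vanish at both `p` and `q`.  Then for every binomial
`g = c X^α - d X^β` with the same exponents (`c, d ≠ 0`), the Hadamard transformations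
`g^{⋆p}` and `g^{⋆q}` are nonzero scalar multiples of each other. -/
theorem stmt_8 {k : Type*} [Field k] {n : ℕ}
    (a b c d : k) (ha : a ≠ 0) (hb : b ≠ 0) (hc : c ≠ 0) (hd : d ≠ 0)
    (α β : Fin (n + 1) →₀ ℕ) (hαβ : α ≠ β)
    (p q : Fin (n + 1) → k) (hp : ∀ i, p i ≠ 0) (hq : ∀ i, q i ≠ 0)
    (hvp : a * ∏ i, p i ^ α i = b * ∏ i, p i ^ β i)
    (hvq : a * ∏ i, q i ^ α i = b * ∏ i, q i ^ β i) :
    ∃ lam : k, lam ≠ 0 ∧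
      (monomial α (c / ∏ i, p i ^ α i) - monomial β (d / ∏ i, p i ^ β i)
          : MvPolynomial (Fin (n + 1)) k) =
        lam • (monomial α (c / ∏ i, q i ^ α i) - monomial β (d / ∏ i, q i ^ β i)) := by
  have hpα : (∏ i, p i ^ α i) ≠ 0 := Finset.prod_ne_zero_iff.2 fun i _ => pow_ne_zero _ (hp i)
  have hpβ : (∏ i, p i ^ β i) ≠ 0 := Finset.prod_ne_zero_iff.2 fun i _ => pow_ne_zero _ (hp i)
  have hqα : (∏ i, q i ^ α i) ≠ 0 := Finset.prod_ne_zero_iff.2 fun i _ => pow_ne_zero _ (hq i)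
  have hqβ : (∏ i, q i ^ β i) ≠ 0 := Finset.prod_ne_zero_iff.2 fun i _ => pow_ne_zero _ (hq i)
  refine ⟨(∏ i, q i ^ α i) / (∏ i, p i ^ α i), div_ne_zero hqα hpα, ?_⟩
  have key : (∏ i, q i ^ α i) * (∏ i, p i ^ β i) = (∏ i, p i ^ α i) * (∏ i, q i ^ β i) := by
    have h1 : (∏ i, p i ^ α i) = b / a * ∏ i, p i ^ β i := by field_simp; linear_combination hvp
    have h2 : (∏ i, q i ^ α i) = b / a * ∏ i, q i ^ β i := by field_simp; linear_combination hvq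
    rw [h1, h2]; ring
  rw [smul_sub, smul_monomial, smul_monomial]
  congr 1
  · congr 1; rw [smul_eq_mul]; field_simp
  · congr 1; rw [smul_eq_mul]; field_simp; linear_combination (-1) * key
end

section
/- Let I, J be homogeneous binomial ideals in k[x_0,...,x_n] generated respectively by {a_i X^{α_i} - b_i X^{β_i}} and {c_i X^{α_i} - d_i X^{β_i}} for i = 1,...,s (same exponents, all coefficients nonzero). Let K be the ideal of S = k[x_0,...,x_n,y_0,...,y_n,z_0,...,z_n] generated by the polynomials a_i Y^{α_i} - b_i Y^{β_i}, c_i Z^{α_i} - d_i Z^{β_i} (i=1,...,s), and x_j - y_j z_j (j=0,...,n). Then for each i, the binomial a_i c_i X^{α_i} - b_i d_i X^{β_i} lies in K (hence in the elimination ideal K ∩ k[x_0,...,x_n]). -/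
open MvPolynomial

/-
Modulo the ideal generated by the `x_j - y_j z_j`, every monomial `X^γ` is congruent to
`Y^γ Z^γ`. Hence `a c X^α - b d X^β ≡ (a Y^α)(c Z^α) - (b Y^β)(d Z^β)`, and the right-hand side
is a combination of the two binomials `a Y^α - b Y^β` and `c Z^α - d Z^β`.
-/

theorem Ideal.prod_pow_sub_prod_pow_mem {R ι : Type*} [CommRing R] [Fintype ι] {I : Ideal R}
    {x y : ι → R} (h : ∀ j, x j - y j ∈ I) (γ : ι → ℕ) :
    ∏ j, x j ^ γ j - ∏ j, y j ^ γ j ∈ I := by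
  rw [← Ideal.Quotient.eq]
  simp only [map_prod, map_pow]
  exact Finset.prod_congr rfl fun j _ => congrArg (· ^ γ j) (Ideal.Quotient.eq.mpr (h j))

theorem Ideal.mul_mul_sub_mul_mul_mem {R : Type*} [CommRing R] {I : Ideal R}
    {a b c d xα xβ yα yβ zα zβ : R} (hα : xα - yα * zα ∈ I) (hβ : xβ - yβ * zβ ∈ I)
    (hy : a * yα - b * yβ ∈ I) (hz : c * zα - d * zβ ∈ I) :
    a * c * xα - b * d * xβ ∈ I := by
  have key : a * c * xα - b * d * xβ =
      a * c * (xα - yα * zα) - b * d * (xβ - yβ * zβ)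
        + c * zα * (a * yα - b * yβ) + b * yβ * (c * zα - d * zβ) := by ring
  rw [key]
  exact add_mem (add_mem (sub_mem (I.mul_mem_left _ hα) (I.mul_mem_left _ hβ))
    (I.mul_mem_left _ hy)) (I.mul_mem_left _ hz)

theorem stmt_14_general {k : Type*} [Field k] (n s : ℕ)
    (a b c d : Fin s → k)
    (α β : Fin s → (Fin (n + 1) → ℕ))
    (Xm Ym Zm : (Fin (n + 1) → ℕ) →
      MvPolynomial (Fin (n + 1) ⊕ Fin (n + 1) ⊕ Fin (n + 1)) k)
    (hXm : ∀ γ, Xm γ = ∏ i, X (Sum.inl i) ^ γ i)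
    (hYm : ∀ γ, Ym γ = ∏ i, X (Sum.inr (Sum.inl i)) ^ γ i)
    (hZm : ∀ γ, Zm γ = ∏ i, X (Sum.inr (Sum.inr i)) ^ γ i)
    (K : Ideal (MvPolynomial (Fin (n + 1) ⊕ Fin (n + 1) ⊕ Fin (n + 1)) k))
    (hK : K = Ideal.span
      ({f | ∃ i, f = C (a i) * Ym (α i) - C (b i) * Ym (β i)} ∪
       {f | ∃ i, f = C (c i) * Zm (α i) - C (d i) * Zm (β i)} ∪
       {f | ∃ j : Fin (n + 1),
          f = X (Sum.inl j) - X (Sum.inr (Sum.inl j)) * X (Sum.inr (Sum.inr j))})) :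
    ∀ i, C (a i * c i) * Xm (α i) - C (b i * d i) * Xm (β i) ∈ K := by
  intro i
  have hxyz (j : Fin (n + 1)) :
      X (Sum.inl j) - X (Sum.inr (Sum.inl j)) * X (Sum.inr (Sum.inr j)) ∈ K :=
    hK ▸ Ideal.subset_span (Or.inr ⟨j, rfl⟩)
  have hmonomial (γ : Fin (n + 1) → ℕ) : Xm γ - Ym γ * Zm γ ∈ K := by
    rw [hXm, hYm, hZm, ← Finset.prod_mul_distrib]
    simp only [← mul_pow]
    exact Ideal.prod_pow_sub_prod_pow_mem hxyz γ
  have hY : C (a i) * Ym (α i) - C (b i) * Ym (β i) ∈ K :=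
    hK ▸ Ideal.subset_span (Or.inl (Or.inl ⟨i, rfl⟩))
  have hZ : C (c i) * Zm (α i) - C (d i) * Zm (β i) ∈ K :=
    hK ▸ Ideal.subset_span (Or.inl (Or.inr ⟨i, rfl⟩))
  rw [map_mul, map_mul]
  exact Ideal.mul_mul_sub_mul_mul_mem (hmonomial (α i)) (hmonomial (β i)) hY hZ

/-- Let `I, J ⊆ k[x_0,…,x_n]` be homogeneous binomial ideals generated by
`a_i X^{α_i} - b_i X^{β_i}` and `c_i X^{α_i} - d_i X^{β_i}` respectively (same exponents, all
coefficients nonzero).  Let `K` be the ideal of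
`S = k[x_0,…,x_n,y_0,…,y_n,z_0,…,z_n]` generated by the `a_i Y^{α_i} - b_i Y^{β_i}`, the
`c_i Z^{α_i} - d_i Z^{β_i}`, and the `x_j - y_j z_j`.  Then for each `i`, the binomial
`a_i c_i X^{α_i} - b_i d_i X^{β_i}` lies in `K` (hence in `K ∩ k[x_0,…,x_n]`). -/
theorem stmt_14 {k : Type*} [Field k] (n s : ℕ)
    (a b c d : Fin s → k)
    (ha : ∀ i, a i ≠ 0) (hb : ∀ i, b i ≠ 0) (hc : ∀ i, c i ≠ 0) (hd : ∀ i, d i ≠ 0)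
    (α β : Fin s → (Fin (n + 1) → ℕ))
    (Xm Ym Zm : (Fin (n + 1) → ℕ) →
      MvPolynomial (Fin (n + 1) ⊕ Fin (n + 1) ⊕ Fin (n + 1)) k)
    (hXm : ∀ γ, Xm γ = ∏ i, X (Sum.inl i) ^ γ i)
    (hYm : ∀ γ, Ym γ = ∏ i, X (Sum.inr (Sum.inl i)) ^ γ i)
    (hZm : ∀ γ, Zm γ = ∏ i, X (Sum.inr (Sum.inr i)) ^ γ i)
    (K : Ideal (MvPolynomial (Fin (n + 1) ⊕ Fin (n + 1) ⊕ Fin (n + 1)) k))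
    (hK : K = Ideal.span
      ({f | ∃ i, f = C (a i) * Ym (α i) - C (b i) * Ym (β i)} ∪
       {f | ∃ i, f = C (c i) * Zm (α i) - C (d i) * Zm (β i)} ∪
       {f | ∃ j : Fin (n + 1),
          f = X (Sum.inl j) - X (Sum.inr (Sum.inl j)) * X (Sum.inr (Sum.inr j))})) :
    ∀ i, C (a i * c i) * Xm (α i) - C (b i * d i) * Xm (β i) ∈ K :=
  stmt_14_general n s a b c d α β Xm Ym Zm hXm hYm hZm K hK
end
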